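/- arXiv:1703.10088 — 6 statements merged into one kernel-verified Lean document; each statement's English description precedes it below -/
import Mathlib

section
/- Every finitely generated (as a topological group) profinite group is Hopfian as a topological group: any continuous surjective endomorphism φ : G → G of a topologically finitely generated profinite group G is an isomorphism. -/
/-!
A continuous homomorphism `f : G →* M` into a finite group, i.e. one with open kernel, is determined
by its values on a finite topological generating set, so there are only finitely many of them.
Precomposition with a continuous surjection `φ` is injective on this finite set, hence bijective,
so every such `f` factors through `φ` and `ker φ ≤ ker f`. Taking `f = G → G ⧸ N` for the open
normal subgroups `N`, whose intersection in a profinite group is trivial, gives `ker φ = ⊥`.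
-/

open scoped Pointwise

theorem MonoidHom.eq_of_eqOn_dense_of_isOpen_ker {G M : Type*} [Group G] [TopologicalSpace G]
    [ContinuousMul G] [Group M] {f g : G →* M} (hf : IsOpen (f.ker : Set G))
    (hg : IsOpen (g.ker : Set G)) {D : Set G} (hD : Dense D) (hfg : Set.EqOn f g D) : f = g := by
  ext x
  obtain ⟨d, hd, k, hk, rfl⟩ :=
    hD.exists_mem_open ((hf.inter hg).smul x) ⟨x, 1, ⟨f.ker.one_mem, g.ker.one_mem⟩, mul_one x⟩
  have hfk : f k = 1 := hk.1
  have hgk : g k = 1 := hk.2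
  simpa only [smul_eq_mul, map_mul, hfk, hgk, mul_one] using hfg hd

theorem finite_monoidHom_isOpen_ker {G M : Type*} [Group G] [TopologicalSpace G]
    [ContinuousMul G] [Group M] [Finite M] {S : Set G} (hS : S.Finite)
    (hdense : Dense (Subgroup.closure S : Set G)) :
    Finite {f : G →* M // IsOpen (f.ker : Set G)} := by
  have := hS.to_subtype
  refine Finite.of_injective (fun f s => f.1 (s : S)) fun f g hfg => Subtype.ext ?_
  exact MonoidHom.eq_of_eqOn_dense_of_isOpen_ker f.2 g.2 hdense
    (MonoidHom.eqOn_closure fun s hs => congrFun hfg ⟨s, hs⟩)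

theorem ker_le_ker_of_finite_isOpen_ker {G M : Type*} [Group G] [TopologicalSpace G] [Group M]
    [Finite {f : G →* M // IsOpen (f.ker : Set G)}] {φ : G →* G} (hc : Continuous φ)
    (hs : Function.Surjective φ) {f : G →* M} (hf : IsOpen (f.ker : Set G)) : φ.ker ≤ f.ker := by
  let precomp : {f : G →* M // IsOpen (f.ker : Set G)} → {f : G →* M // IsOpen (f.ker : Set G)} :=
    fun g => ⟨g.1.comp φ, by rw [← MonoidHom.comap_ker]; exact g.2.preimage hc⟩
  have hinj : Function.Injective precomp := fun g g' h =>
    Subtype.ext <| (MonoidHom.cancel_right hs).mp (congrArg Subtype.val h)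
  obtain ⟨g, hg⟩ := Finite.surjective_of_injective hinj ⟨f, hf⟩
  have hfactor : g.1.comp φ = f := congrArg Subtype.val hg
  intro x hx
  rw [MonoidHom.mem_ker] at hx ⊢
  rw [← hfactor, MonoidHom.comp_apply, hx, map_one]

theorem ProfiniteGrp.eq_one_of_forall_mem_openNormalSubgroup {G : Type*} [Group G]
    [TopologicalSpace G] [IsTopologicalGroup G] [CompactSpace G] [T2Space G]
    [TotallyDisconnectedSpace G] {x : G} (hx : ∀ N : OpenNormalSubgroup G, x ∈ N) : x = 1 := by
  by_contra hx1
  obtain ⟨N, hN⟩ := exist_openNormalSubgroup_sub_open_nhds_of_one isOpen_compl_singleton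
    (Set.mem_compl_singleton_iff.mpr (Ne.symm hx1))
  exact hN (hx N) rfl

/-- A topologically finitely generated profinite group is Hopfian: any
continuous surjective endomorphism is an isomorphism. -/
theorem stmt_5 {G : Type*} [Group G] [TopologicalSpace G] [IsTopologicalGroup G]
    [CompactSpace G] [T2Space G] [TotallyDisconnectedSpace G]
    (hfg : ∃ S : Finset G, Dense (Subgroup.closure (S : Set G) : Set G))
    (φ : G →* G) (hc : Continuous φ) (hs : Function.Surjective φ) :
    Function.Bijective φ := by
  obtain ⟨S, hS⟩ := hfg
  refine ⟨(MonoidHom.ker_eq_bot_iff φ).mp <| (Subgroup.eq_bot_iff_forall _).mpr fun x hx => ?_, hs⟩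
  refine ProfiniteGrp.eq_one_of_forall_mem_openNormalSubgroup fun N => ?_
  have : Finite (G ⧸ N.toSubgroup) := Subgroup.quotient_finite_of_isOpen _ N.isOpen
  have := finite_monoidHom_isOpen_ker (M := G ⧸ N.toSubgroup) S.finite_toSet hS
  have hN : IsOpen ((QuotientGroup.mk' N.toSubgroup).ker : Set G) := by
    rw [QuotientGroup.ker_mk']; exact N.isOpen
  have hxN := ker_le_ker_of_finite_isOpen_ker hc hs hN hx
  rwa [QuotientGroup.ker_mk'] at hxN
end

section
/- A submonoid N of a free monoid A* is right unitary (for all u, v in A*, if u ∈ N and uv ∈ N then v ∈ N) if and only if N is generated by a prefix code, i.e., by a set of nonempty words none of which is a proper prefix of another. -/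
/-!
If `N` is right unitary, the nonempty words of `N` with no nonempty proper prefix in `N` form a
prefix code generating `N`: a word of `N` outside this set splits as `p * q` with `p ∈ N` and both
factors nonempty, and right unitarity puts `q` in `N`, so induction on length applies.
Conversely, let `X` be a prefix code. If `u` and `u * v` are products of words of `X`, the first
factors of the two products are prefix-comparable, hence equal; cancelling them one at a time
exhausts the factorisation of `u` and leaves `v` as a product of words of `X`.
-/

namespace FreeMonoid

variable {α : Type*}

theorem toList_isPrefix_iff {x y : FreeMonoid α} : x.toList <+: y.toList ↔ ∃ t, x * t = y := by
  constructor
  · rintro ⟨t, ht⟩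
    exact ⟨ofList t, toList.injective (by simpa using ht)⟩
  · rintro ⟨t, rfl⟩
    exact ⟨t.toList, (toList_mul x t).symm⟩

theorem toList_isPrefix_or_isPrefix_of_mul_eq_mul {x y s t : FreeMonoid α} (h : x * s = y * t) :
    x.toList <+: y.toList ∨ y.toList <+: x.toList :=
  List.prefix_or_prefix_of_prefix (toList_isPrefix_iff.2 ⟨s, h⟩)
    (toList_isPrefix_iff.2 ⟨t, rfl⟩)

def IsRightUnitary (N : Submonoid (FreeMonoid α)) : Prop :=
  ∀ u v, u ∈ N → u * v ∈ N → v ∈ N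

def IsPrefixFree (X : Set (FreeMonoid α)) : Prop :=
  ∀ x ∈ X, ∀ y ∈ X, x.toList <+: y.toList → x = y

section PrefixFree

variable {X : Set (FreeMonoid α)}

theorem IsPrefixFree.eq_of_mul_eq_mul (hX : IsPrefixFree X) {x y s t : FreeMonoid α}
    (hx : x ∈ X) (hy : y ∈ X) (h : x * s = y * t) : x = y :=
  (toList_isPrefix_or_isPrefix_of_mul_eq_mul h).elim (hX x hx y hy) fun hyx =>
    (hX y hy x hx hyx).symm

theorem IsPrefixFree.mem_closure_of_list_prod_mul_eq (hX1 : ∀ x ∈ X, x ≠ 1)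
    (hX : IsPrefixFree X) {l m : List (FreeMonoid α)} (hl : ∀ x ∈ l, x ∈ X)
    (hm : ∀ y ∈ m, y ∈ X) {v : FreeMonoid α} (h : l.prod * v = m.prod) :
    v ∈ Submonoid.closure X := by
  induction l generalizing m with
  | nil =>
    rw [List.prod_nil, one_mul] at h
    exact h ▸ Submonoid.list_prod_mem _ fun y hy => Submonoid.subset_closure (hm y hy)
  | cons x l ih =>
    have hxX := hl x List.mem_cons_self
    rw [List.prod_cons, mul_assoc] at h
    cases m with
    | nil => exact absurd (eq_one_of_mul_right' h) (hX1 x hxX)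
    | cons y m =>
      have hyX := hm y List.mem_cons_self
      rw [List.prod_cons] at h
      obtain rfl := hX.eq_of_mul_eq_mul hxX hyX h
      exact ih (fun z hz => hl z (List.mem_cons_of_mem x hz))
        (fun z hz => hm z (List.mem_cons_of_mem x hz)) (mul_left_cancel h)

theorem IsPrefixFree.isRightUnitary_closure (hX1 : ∀ x ∈ X, x ≠ 1) (hX : IsPrefixFree X) :
    IsRightUnitary (Submonoid.closure X) := by
  intro u v hu huv
  obtain ⟨l, hl, rfl⟩ := Submonoid.exists_list_of_mem_closure hu
  obtain ⟨m, hm, hlm⟩ := Submonoid.exists_list_of_mem_closure huv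
  exact hX.mem_closure_of_list_prod_mul_eq hX1 hl hm hlm.symm

end PrefixFree

section RightUnitary

variable {N : Submonoid (FreeMonoid α)}

def prefixMinimal (N : Submonoid (FreeMonoid α)) : Set (FreeMonoid α) :=
  {x | x ∈ N ∧ x ≠ 1 ∧ ∀ p q, p * q = x → p ∈ N → p = 1 ∨ q = 1}

theorem isPrefixFree_prefixMinimal (N : Submonoid (FreeMonoid α)) :
    IsPrefixFree (prefixMinimal N) := by
  rintro x ⟨hxN, hx1, -⟩ y ⟨-, -, hy⟩ hxy
  obtain ⟨t, rfl⟩ := toList_isPrefix_iff.1 hxy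
  rcases hy x t rfl hxN with hx | rfl
  · exact absurd hx hx1
  · exact (mul_one x).symm

theorem IsRightUnitary.mem_closure_prefixMinimal (hN : IsRightUnitary N) {w : FreeMonoid α}
    (hw : w ∈ N) : w ∈ Submonoid.closure (prefixMinimal N) := by
  induction hn : w.length using Nat.strong_induction_on generalizing w with
  | _ n ih =>
    by_cases hw1 : w = 1
    · exact hw1 ▸ Submonoid.one_mem _
    by_cases hmin : ∀ p q, p * q = w → p ∈ N → p = 1 ∨ q = 1
    · exact Submonoid.subset_closure ⟨hw, hw1, hmin⟩
    push Not at hmin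
    obtain ⟨p, q, rfl, hpN, hp1, hq1⟩ := hmin
    have hp : p.length ≠ 0 := mt length_eq_zero.1 hp1
    have hq : q.length ≠ 0 := mt length_eq_zero.1 hq1
    rw [length_mul] at hn
    exact Submonoid.mul_mem _ (ih _ (by omega) hpN rfl) (ih _ (by omega) (hN p q hpN hw) rfl)

theorem IsRightUnitary.closure_prefixMinimal (hN : IsRightUnitary N) :
    Submonoid.closure (prefixMinimal N) = N :=
  le_antisymm (Submonoid.closure_le.2 fun _ hx => hx.1) fun _ => hN.mem_closure_prefixMinimal

end RightUnitary

end FreeMonoid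

theorem stmt_7_general {A : Type*} (N : Submonoid (FreeMonoid A)) :
    (∀ u v : FreeMonoid A, u ∈ N → u * v ∈ N → v ∈ N) ↔
      ∃ X : Set (FreeMonoid A),
        (∀ x ∈ X, x ≠ 1) ∧
        (∀ x ∈ X, ∀ y ∈ X, FreeMonoid.toList x <+: FreeMonoid.toList y → x = y) ∧
        N = Submonoid.closure X := by
  constructor
  · intro hN
    exact ⟨FreeMonoid.prefixMinimal N, fun _ hx => hx.2.1,
      FreeMonoid.isPrefixFree_prefixMinimal N,
      (FreeMonoid.IsRightUnitary.closure_prefixMinimal hN).symm⟩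
  · rintro ⟨X, hX1, hX, rfl⟩
    exact FreeMonoid.IsPrefixFree.isRightUnitary_closure hX1 hX

/-- A submonoid `N` of a free monoid is right unitary iff it is generated by a
prefix code: a set of nonempty words none of which is a (proper) prefix of
another. -/
theorem stmt_7 {A : Type*} [Fintype A] (N : Submonoid (FreeMonoid A)) :
    (∀ u v : FreeMonoid A, u ∈ N → u * v ∈ N → v ∈ N) ↔
      ∃ X : Set (FreeMonoid A),
        (∀ x ∈ X, x ≠ 1) ∧
        (∀ x ∈ X, ∀ y ∈ X, FreeMonoid.toList x <+: FreeMonoid.toList y → x = y) ∧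
        N = Submonoid.closure X :=
  stmt_7_general N
end

section
/- Let F be a factorial set and x ∈ F. Let Γ_F(x) = { w ∈ A* : xw ∈ F and xw ∈ A*x } and let R_F(x) be the set of nonempty elements of Γ_F(x) with no proper nonempty prefix in Γ_F(x). Then Γ_F(x) = R_F(x)* ∩ x⁻¹F, where x⁻¹F = { w : xw ∈ F }. -/
/-!
Γ_F(x) is right unitary: if `p` and `p v` lie in it then so does `v`, because `x v` is a suffix
of `x p v ∈ F` and is at least as long as the suffix `x`. In a right unitary set of words every
element factors greedily into shortest nonempty prefixes lying in the set, i.e. into return words.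
Conversely, each return word `y` satisfies `x y ∈ A* x`, and this property is closed under
concatenation.
-/

section Words

variable {α : Type*}

def prefixMinimal (S : Set (List α)) : Set (List α) :=
  {y | y ≠ [] ∧ y ∈ S ∧ ∀ p : List α, p <+: y → p ≠ [] → p ≠ y → p ∉ S}

theorem exists_mem_prefixMinimal_prefix {S : Set (List α)} :
    ∀ {w : List α}, w ∈ S → w ≠ [] → ∃ y ∈ prefixMinimal S, y <+: w
  | w, hw, hne => by
    by_cases h : ∃ p, p <+: w ∧ p ≠ [] ∧ p ≠ w ∧ p ∈ S
    · obtain ⟨p, hpw, hpne, hpw', hp⟩ := h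
      have : p.length < w.length :=
        lt_of_le_of_ne hpw.length_le fun h => hpw' (hpw.eq_of_length h)
      obtain ⟨y, hy, hyp⟩ := exists_mem_prefixMinimal_prefix hp hpne
      exact ⟨y, hy, hyp.trans hpw⟩
    · push Not at h
      exact ⟨w, ⟨hne, hw, fun p hpw hpne hpw' hp => h p hpw hpne hpw' hp⟩, List.prefix_refl w⟩
termination_by w => w.length

theorem exists_flatten_prefixMinimal_eq {S : Set (List α)}
    (hS : ∀ p v, p ∈ S → p ++ v ∈ S → v ∈ S) :
    ∀ {w : List α}, w ∈ S → ∃ l : List (List α), (∀ y ∈ l, y ∈ prefixMinimal S) ∧ l.flatten = w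
  | w, hw => by
    rcases eq_or_ne w [] with rfl | hne
    · exact ⟨[], by simp, rfl⟩
    obtain ⟨y, hy, v, rfl⟩ := exists_mem_prefixMinimal_prefix hw hne
    have : v.length < (y ++ v).length := by simp [List.length_pos_iff.2 hy.1]
    obtain ⟨l, hl, rfl⟩ := exists_flatten_prefixMinimal_eq hS (hS y v hy.2.1 hw)
    refine ⟨y :: l, ?_, rfl⟩
    rintro z (_ | ⟨_, hz⟩)
    exacts [hy, hl z hz]
termination_by w => w.length

/-- `Γ_F(x)`; its `prefixMinimal` elements are the return words `R_F(x)`. -/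
def returnSet (F : Set (List α)) (x : List α) : Set (List α) :=
  {w | x ++ w ∈ F ∧ ∃ s : List α, x ++ w = s ++ x}

theorem mem_returnSet_of_append_mem {F : Set (List α)}
    (hfac : ∀ w ∈ F, ∀ u : List α, u <:+: w → u ∈ F) {x p v : List α}
    (hp : ∃ s : List α, x ++ p = s ++ x) (hpv : p ++ v ∈ returnSet F x) :
    v ∈ returnSet F x := by
  obtain ⟨s, hs⟩ := hp
  obtain ⟨hF, t, ht⟩ := hpv
  have hv : x ++ v <:+ x ++ (p ++ v) :=
    ⟨s, by rw [← List.append_assoc x, hs, List.append_assoc]⟩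
  have hx : x <:+ x ++ (p ++ v) := ⟨t, ht.symm⟩
  obtain ⟨u, hu⟩ := List.suffix_of_suffix_length_le hx hv (by simp)
  exact ⟨hfac _ hF _ hv.isInfix, u, hu.symm⟩

theorem exists_append_flatten_eq {x : List α} :
    ∀ {l : List (List α)}, (∀ y ∈ l, ∃ s, x ++ y = s ++ x) → ∃ s, x ++ l.flatten = s ++ x
  | [], _ => ⟨[], by simp⟩
  | y :: l, h => by
    obtain ⟨s, hs⟩ := h y List.mem_cons_self
    obtain ⟨t, ht⟩ := exists_append_flatten_eq fun z hz => h z (List.mem_cons_of_mem y hz)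
    exact ⟨s ++ t, by
      rw [List.flatten_cons, ← List.append_assoc, hs, List.append_assoc, ht, List.append_assoc]⟩

end Words

theorem stmt_10_general {A : Type*} (F : Set (List A))
    (hfac : ∀ w ∈ F, ∀ u : List A, u <:+: w → u ∈ F)
    (x : List A) :
    {w : List A | x ++ w ∈ F ∧ ∃ s : List A, x ++ w = s ++ x} =
      {w : List A | ∃ l : List (List A),
          (∀ y ∈ l, y ≠ [] ∧ (x ++ y ∈ F ∧ ∃ s : List A, x ++ y = s ++ x) ∧
            ∀ p : List A, p <+: y → p ≠ [] → p ≠ y →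
              ¬(x ++ p ∈ F ∧ ∃ s : List A, x ++ p = s ++ x)) ∧
          l.flatten = w}
      ∩ {w : List A | x ++ w ∈ F} := by
  ext w
  constructor
  · intro hw
    exact ⟨exists_flatten_prefixMinimal_eq (S := returnSet F x)
      (fun p v hp => mem_returnSet_of_append_mem hfac hp.2) hw, hw.1⟩
  · rintro ⟨⟨l, hl, rfl⟩, hF⟩
    exact ⟨hF, exists_append_flatten_eq fun y hy => (hl y hy).2.1.2⟩

/-- `Γ_F(x) = R_F(x)* ∩ x⁻¹F`, where `Γ_F(x) = {w | xw ∈ F ∧ xw ∈ A*x}` and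
`R_F(x)` is the set of nonempty elements of `Γ_F(x)` with no proper nonempty
prefix in `Γ_F(x)` (the return words to `x`). -/
theorem stmt_10 {A : Type*} [Fintype A] (F : Set (List A))
    (hfac : ∀ w ∈ F, ∀ u : List A, u <:+: w → u ∈ F)
    (x : List A) (hx : x ∈ F) :
    {w : List A | x ++ w ∈ F ∧ ∃ s : List A, x ++ w = s ++ x} =
      {w : List A | ∃ l : List (List A),
          (∀ y ∈ l, y ≠ [] ∧ (x ++ y ∈ F ∧ ∃ s : List A, x ++ y = s ++ x) ∧
            ∀ p : List A, p <+: y → p ≠ [] → p ≠ y →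
              ¬(x ++ p ∈ F ∧ ∃ s : List A, x ++ p = s ++ x)) ∧
          l.flatten = w}
      ∩ {w : List A | x ++ w ∈ F} :=
  stmt_10_general F hfac x
end

section
/- Let F be a factorial set. For words x, y with xy ∈ F, every return word to xy in F belongs to the submonoid generated by the return words to y: R_F(xy) ⊆ R_F(y)*. -/
/-- The set of return words to `u` in `F`: nonempty words `w` such that
`u ++ w ∈ F`, `u ++ w` ends with `u`, and `u ++ w` has no internal occurrence
of `u`. -/
def ReturnWords {A : Type*} (F : Set (List A)) (u : List A) : Set (List A) :=
  {w | w ≠ [] ∧ u ++ w ∈ F ∧ (∃ s : List A, u ++ w = s ++ u) ∧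
    ∀ p s : List A, u ++ w = p ++ u ++ s → p = [] ∨ s = []}

private lemma prefix_of_prefix_len_le {A : Type*} {u v w : List A}
    (h1 : u <+: w) (h2 : v <+: w) (h : u.length ≤ v.length) : u <+: v := by
  rw [List.prefix_iff_eq_take] at h1 h2 ⊢
  rw [h2, List.take_take, min_eq_left h, ← h1]

private lemma suffix_of_suffix_len_le {A : Type*} {u v w : List A}
    (h1 : u <:+ w) (h2 : v <:+ w) (h : u.length ≤ v.length) : u <:+ v := by
  rw [← List.reverse_prefix] at h1 h2 ⊢
  exact prefix_of_prefix_len_le h1 h2 (by simpa using h)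

private lemma key_lemma {A : Type*} (F : Set (List A))
    (hfac : ∀ w ∈ F, ∀ v : List A, v <:+: w → v ∈ F) (y : List A) :
    ∀ n : ℕ, ∀ w : List A, w.length ≤ n → y ++ w ∈ F → y <:+ y ++ w →
      ∃ l : List (List A), (∀ z ∈ l, z ∈ ReturnWords F y) ∧ l.flatten = w := by
  intro n
  induction n with
  | zero =>
    intro w hw _ _
    have : w = [] := List.length_eq_zero_iff.mp (Nat.le_zero.mp hw)
    exact ⟨[], by simp, by simp [this]⟩
  | succ n ih =>
    intro w hw hF hsuf
    rcases eq_or_ne w [] with rfl | hne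
    · exact ⟨[], by simp, by simp⟩
    by_cases h : ∀ p s : List A, y ++ w = p ++ y ++ s → p = [] ∨ s = []
    · refine ⟨[w], ?_, by simp⟩
      intro z hz
      simp only [List.mem_singleton] at hz
      subst hz
      obtain ⟨t, ht⟩ := hsuf
      exact ⟨hne, hF, ⟨t, ht.symm⟩, h⟩
    · push_neg at h
      obtain ⟨p, s, hps, hp, hs⟩ := h
      have hlen : w.length = p.length + s.length := by
        have := congrArg List.length hps
        simp at this; omega
      have hsl : 0 < s.length := List.length_pos_iff.mpr hs
      have hpl : 0 < p.length := List.length_pos_iff.mpr hp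
      set a := w.take p.length with ha
      set b := w.drop p.length with hb
      have hab : a ++ b = w := List.take_append_drop _ _
      have ha_len : a.length = p.length := by
        rw [ha, List.length_take]; omega
      have hkey : (y ++ a) ++ b = (p ++ y) ++ s := by
        rw [List.append_assoc, hab, hps]
      obtain ⟨h1, h2⟩ := List.append_inj hkey (by simp [ha_len, Nat.add_comm])
      -- y ++ a ∈ F
      have haF : y ++ a ∈ F := by
        refine hfac _ hF _ ⟨[], s, ?_⟩
        simp only [List.nil_append]
        rw [hps, ← h1]
      have hbF : y ++ b ∈ F := by
        refine hfac _ hF _ ⟨p, [], ?_⟩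
        simp only [List.append_nil]
        rw [hps, h2, List.append_assoc]
      have ha_suf : y <:+ y ++ a := ⟨p, h1.symm⟩
      have hb_suf : y <:+ y ++ b := by
        refine suffix_of_suffix_len_le hsuf ⟨p, ?_⟩ (by simp)
        rw [hps, h2, List.append_assoc]
      have hal : a.length ≤ n := by omega
      have hbl : b.length ≤ n := by
        have : b.length = s.length := by rw [h2]
        omega
      obtain ⟨la, hla, hla'⟩ := ih a hal haF ha_suf
      obtain ⟨lb, hlb, hlb'⟩ := ih b hbl hbF hb_suf
      refine ⟨la ++ lb, ?_, ?_⟩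
      · intro z hz
        rcases List.mem_append.mp hz with hz | hz
        · exact hla z hz
        · exact hlb z hz
      · rw [List.flatten_append, hla', hlb', hab]

/-- For a factorial set `F` and `xy ∈ F`, every return word to `xy` belongs to
the submonoid generated by the return words to `y`. -/
theorem stmt_11 {A : Type*} [Fintype A] (F : Set (List A))
    (hfac : ∀ w ∈ F, ∀ v : List A, v <:+: w → v ∈ F)
    (x y : List A) (hxy : x ++ y ∈ F) :
    ReturnWords F (x ++ y) ⊆
      {w : List A | ∃ l : List (List A),
        (∀ z ∈ l, z ∈ ReturnWords F y) ∧ l.flatten = w} := by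
  intro w hw
  obtain ⟨hne, hF, ⟨t, ht⟩, _⟩ := hw
  have hywF : y ++ w ∈ F := hfac _ hF _ ⟨x, [], by simp⟩
  have hysuf : y <:+ y ++ w := by
    have h1 : y ++ w <:+ x ++ y ++ w := ⟨x, by simp [List.append_assoc]⟩
    have h2 : y <:+ x ++ y ++ w := by
      refine ⟨t ++ x, ?_⟩
      rw [List.append_assoc, ← ht]
    exact suffix_of_suffix_len_le h2 h1 (by simp)
  exact key_lemma F hfac y w.length w le_rfl hywF hysuf
end

section
/- In the Fibonacci set F (the set of factors of the fixed point of the Fibonacci morphism φ: a ↦ ab, b ↦ a), the set of return words to the letter a is R_F(a) = {a, ba} and the set of return words to the letter b is R_F(b) = {ab, aab}. -/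
/-- The Fibonacci substitution `a ↦ ab`, `b ↦ a` on words over `{a, b}`,
where `a = false` and `b = true`. -/
def fibSub : List Bool → List Bool :=
  fun w => w.flatMap fun c => if c then [false] else [false, true]

/-- The Fibonacci set: the set of factors of the words `φⁿ(a)`. -/
def FibSet : Set (List Bool) :=
  {u | ∃ n : ℕ, u <:+: fibSub^[n] [false]}

lemma fibSub_nil : fibSub [] = [] := rfl
lemma fibSub_true (l : List Bool) : fibSub (true :: l) = false :: fibSub l := rfl
lemma fibSub_false (l : List Bool) : fibSub (false :: l) = false :: true :: fibSub l := rfl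

lemma fib_head (l : List Bool) : fibSub l = [] ∨ ∃ t, fibSub l = false :: t := by
  cases l with
  | nil => exact Or.inl rfl
  | cons c l => cases c
                · exact Or.inr ⟨true :: fibSub l, rfl⟩
                · exact Or.inr ⟨fibSub l, rfl⟩

lemma noBB : ∀ l : List Bool, ¬ [true, true] <:+: fibSub l := by
  intro l
  induction l with
  | nil => simp [fibSub_nil]
  | cons c l ih =>
    cases c
    · rw [fibSub_false]
      intro h
      rcases List.infix_cons_iff.mp h with hp | hi
      · rcases List.prefix_cons_iff.mp hp with h' | ⟨t, ht, _⟩ <;> simp_all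
      · rcases List.infix_cons_iff.mp hi with hp | hi2
        · rcases List.prefix_cons_iff.mp hp with h' | ⟨t, ht, htp⟩
          · simp_all
          · have ht' : [true] = t := by simpa using ht
            subst ht'
            rcases fib_head l with h0 | ⟨t0, h0⟩
            · rw [h0] at htp; simp at htp
            · rw [h0] at htp
              rcases List.prefix_cons_iff.mp htp with h' | ⟨t', ht', _⟩ <;> simp_all
        · exact ih hi2
    · rw [fibSub_true]
      intro h
      rcases List.infix_cons_iff.mp h with hp | hi
      · rcases List.prefix_cons_iff.mp hp with h' | ⟨t, ht, _⟩ <;> simp_all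
      · exact ih hi

lemma noAAA : ∀ l : List Bool, ¬ [true, true] <:+: l →
    ¬ [false, false, false] <:+: fibSub l := by
  intro l
  induction l with
  | nil => intro _; simp [fibSub_nil]
  | cons c l ih =>
    intro h
    have h' : ¬ [true, true] <:+: l := fun hh => h (List.infix_cons hh)
    cases c
    · rw [fibSub_false]
      intro hf
      rcases List.infix_cons_iff.mp hf with hp | hi
      · rcases List.prefix_cons_iff.mp hp with h0 | ⟨t, ht, htp⟩
        · simp_all
        · have ht' : [false, false] = t := by simpa using ht
          subst ht'
          rcases List.prefix_cons_iff.mp htp with h0 | ⟨t', ht', _⟩ <;> simp_all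
      · rcases List.infix_cons_iff.mp hi with hp | hi2
        · rcases List.prefix_cons_iff.mp hp with h0 | ⟨t, ht, _⟩ <;> simp_all
        · exact ih h' hi2
    · rw [fibSub_true]
      intro hf
      rcases List.infix_cons_iff.mp hf with hp | hi
      · rcases List.prefix_cons_iff.mp hp with h0 | ⟨t, ht, htp⟩
        · simp_all
        · have ht' : [false, false] = t := by simpa using ht
          subst ht'
          -- [false, false] <+: fibSub l
          rcases l with _ | ⟨c', l'⟩
          · rw [fibSub_nil] at htp; simp at htp
          · cases c'
            · rw [fibSub_false] at htp
              rcases List.prefix_cons_iff.mp htp with h0 | ⟨t', ht', htp'⟩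
              · simp_all
              · have h1 : [false] = t' := by simpa using ht'
                subst h1
                rcases List.prefix_cons_iff.mp htp' with h0 | ⟨t'', ht'', _⟩ <;> simp_all
            · exact absurd ⟨[], l', rfl⟩ h
      · exact ih h' hi

lemma noBB_iter (n : ℕ) : ¬ [true, true] <:+: fibSub^[n] [false] := by
  cases n with
  | zero => decide
  | succ n => rw [Function.iterate_succ_apply']; exact noBB _

lemma noAAA_iter (n : ℕ) : ¬ [false, false, false] <:+: fibSub^[n] [false] := by
  cases n with
  | zero => decide
  | succ n => rw [Function.iterate_succ_apply']; exact noAAA _ (noBB_iter n)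

lemma noBB_mem {v : List Bool} (hv : v ∈ FibSet) : ¬ [true, true] <:+: v := by
  rintro h
  obtain ⟨n, hn⟩ := hv
  exact noBB_iter n (h.trans hn)

lemma noAAA_mem {v : List Bool} (hv : v ∈ FibSet) : ¬ [false, false, false] <:+: v := by
  rintro h
  obtain ⟨n, hn⟩ := hv
  exact noAAA_iter n (h.trans hn)

/-- In the Fibonacci set, `R_F(a) = {a, ba}` and `R_F(b) = {ab, aab}`. -/
theorem stmt_13 :
    ReturnWords FibSet [false] = {[false], [true, false]} ∧
    ReturnWords FibSet [true] = {[false, true], [false, false, true]} := by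
  constructor
  · ext w
    simp only [ReturnWords, Set.mem_setOf_eq, Set.mem_insert_iff, Set.mem_singleton_iff]
    constructor
    · rintro ⟨hne, hmem, ⟨s, hs⟩, hocc⟩
      rcases w with _ | ⟨a, w'⟩
      · exact absurd rfl hne
      cases a
      · -- w = false :: w'
        rcases hocc [false] w' rfl with h | h
        · simp at h
        · subst h; exact Or.inl rfl
      · -- w = true :: w'
        rcases w' with _ | ⟨b, w''⟩
        · exfalso
          have hl := congrArg List.getLast? hs
          rw [List.getLast?_concat] at hl
          simp at hl
        cases b
        · -- w = true :: false :: w''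
          rcases hocc [false, true] w'' rfl with h | h
          · simp at h
          · subst h; exact Or.inr rfl
        · -- bb infix
          exfalso
          exact noBB_mem hmem ⟨[false], w'', rfl⟩
    · rintro (rfl | rfl)
      · refine ⟨by simp, ⟨3, by decide⟩, ⟨[false], rfl⟩, ?_⟩
        intro p s h
        rcases p with _ | ⟨a, p⟩
        · exact Or.inl rfl
        · right
          have hl := congrArg List.length h
          simp [List.length_append] at hl
          exact List.eq_nil_of_length_eq_zero (by omega)
      · refine ⟨by simp, ⟨2, by decide⟩, ⟨[false, true], rfl⟩, ?_⟩
        intro p s h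
        rcases p with _ | ⟨a, _ | ⟨b, p⟩⟩
        · exact Or.inl rfl
        · simp_all
        · right
          have hl := congrArg List.length h
          simp [List.length_append] at hl
          exact List.eq_nil_of_length_eq_zero (by omega)
  · ext w
    simp only [ReturnWords, Set.mem_setOf_eq, Set.mem_insert_iff, Set.mem_singleton_iff]
    constructor
    · rintro ⟨hne, hmem, ⟨s, hs⟩, hocc⟩
      rcases w with _ | ⟨a, w'⟩
      · exact absurd rfl hne
      cases a
      · -- w = false :: w'
        rcases w' with _ | ⟨b, w''⟩
        · exfalso
          have hl := congrArg List.getLast? hs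
          rw [List.getLast?_concat] at hl
          simp at hl
        cases b
        · -- w = false :: false :: w''
          rcases w'' with _ | ⟨c, w'''⟩
          · exfalso
            have hl := congrArg List.getLast? hs
            rw [List.getLast?_concat] at hl
            simp at hl
          cases c
          · -- aaa infix
            exfalso
            exact noAAA_mem hmem ⟨[true], w''', rfl⟩
          · rcases hocc [true, false, false] w''' rfl with h | h
            · simp at h
            · subst h; exact Or.inr rfl
        · -- w = false :: true :: w''
          rcases hocc [true, false] w'' rfl with h | h
          · simp at h
          · subst h; exact Or.inl rfl
      · -- bb prefix
        exfalso
        exact noBB_mem hmem ⟨[], w', rfl⟩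
    · rintro (rfl | rfl)
      · refine ⟨by simp, ⟨4, by decide⟩, ⟨[true, false], rfl⟩, ?_⟩
        intro p s h
        rcases p with _ | ⟨a, _ | ⟨b, p⟩⟩
        · exact Or.inl rfl
        · simp_all
        · right
          have hl := congrArg List.length h
          simp [List.length_append] at hl
          exact List.eq_nil_of_length_eq_zero (by omega)
      · refine ⟨by simp, ⟨3, by decide⟩, ⟨[true, false, false], rfl⟩, ?_⟩
        intro p s h
        rcases p with _ | ⟨a, _ | ⟨b, _ | ⟨c, p⟩⟩⟩
        · exact Or.inl rfl
        · simp_all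
        · simp_all
        · right
          have hl := congrArg List.length h
          simp [List.length_append] at hl
          exact List.eq_nil_of_length_eq_zero (by omega)
end

section
/- Let F be a factorial subset of A* over a finite alphabet. If F is a uniformly recurrent tree set, then F is not periodic; more precisely, if F is the set of factors of w* for a primitive word w, then the set of return words to w in F is the singleton {w}, which does not generate the free group F(A) when |A| ≥ 2. -/
private lemma flat_rep_len {A : Type*} (w : List A) (n : ℕ) :
    ((List.replicate n w).flatten).length = n * w.length := by
  induction n with
  | zero => simp
  | succ n ih => rw [List.replicate_succ, List.flatten_cons, List.length_append, ih]; ring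

private lemma flat_rep_add {A : Type*} (w : List A) (m n : ℕ) :
    (List.replicate (m + n) w).flatten
      = (List.replicate m w).flatten ++ (List.replicate n w).flatten := by
  rw [List.replicate_add, List.flatten_append]

private lemma flat_rep_succ {A : Type*} (w : List A) (n : ℕ) :
    (List.replicate (n + 1) w).flatten = w ++ (List.replicate n w).flatten := by
  rw [List.replicate_succ, List.flatten_cons]

/-- Commuting words are powers of a common word. -/
private lemma comm_words {A : Type*} :
    ∀ (N : ℕ) (x y : List A), x.length + y.length ≤ N → x ++ y = y ++ x →
      ∃ (z : List A) (m n : ℕ),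
        x = (List.replicate m z).flatten ∧ y = (List.replicate n z).flatten := by
  intro N
  induction N with
  | zero =>
    intro x y hl _
    have hx : x = [] := List.length_eq_zero_iff.mp (by omega)
    have hy : y = [] := List.length_eq_zero_iff.mp (by omega)
    exact ⟨[], 0, 0, by simp [hx], by simp [hy]⟩
  | succ N ih =>
    intro x y hl hc
    rcases eq_or_ne x [] with hx | hx
    · exact ⟨y, 0, 1, by simp [hx], by simp⟩
    rcases eq_or_ne y [] with hy | hy
    · exact ⟨x, 1, 0, by simp, by simp [hy]⟩
    rcases le_total x.length y.length with hle | hle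
    · have hxy : x <+: y := by
        have h1 : x <+: y ++ x := hc ▸ List.prefix_append x y
        exact List.prefix_of_prefix_length_le h1 (List.prefix_append y x) hle
      obtain ⟨y', rfl⟩ := hxy
      have hc' : x ++ y' = y' ++ x := by
        apply List.append_cancel_left (as := x)
        simpa [List.append_assoc] using hc
      have hN : x.length + y'.length ≤ N := by
        have hx0 : 0 < x.length := List.length_pos_iff.mpr hx
        simp only [List.length_append] at hl
        omega
      obtain ⟨z, m, n, hxz, hyz⟩ := ih x y' hN hc'
      exact ⟨z, m, m + n, hxz, by rw [flat_rep_add, ← hxz, ← hyz]⟩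
    · have hyx : y <+: x := by
        have h1 : y <+: x ++ y := hc ▸ List.prefix_append y x
        exact List.prefix_of_prefix_length_le h1 (List.prefix_append x y) hle
      obtain ⟨x', rfl⟩ := hyx
      have hc' : y ++ x' = x' ++ y := by
        apply List.append_cancel_left (as := y)
        simpa [List.append_assoc] using hc.symm
      have hN : y.length + x'.length ≤ N := by
        have hy0 : 0 < y.length := List.length_pos_iff.mpr hy
        simp only [List.length_append] at hl
        omega
      obtain ⟨z, m, n, hyz, hxz⟩ := ih y x' hN hc'
      exact ⟨z, m + n, m, by rw [flat_rep_add, ← hxz, ← hyz], hyz⟩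

/-- A primitive word has no internal occurrence in its square. -/
private lemma no_overlap {A : Type*} (w : List A)
    (hprim : ∀ (u : List A) (k : ℕ), w = (List.replicate k u).flatten → k = 1) :
    ∀ p s : List A, w ++ w = p ++ w ++ s → p = [] ∨ s = [] := by
  intro p s h
  by_contra hcon
  push_neg at hcon
  obtain ⟨hp, hs⟩ := hcon
  have hlen := congrArg List.length h
  simp only [List.length_append] at hlen
  have hple : p.length ≤ w.length := by omega
  have hpw : p <+: w := by
    have h1 : p <+: w ++ w := ⟨w ++ s, by rw [h, List.append_assoc]⟩
    exact List.prefix_of_prefix_length_le h1 (List.prefix_append w w) hple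
  obtain ⟨t, rfl⟩ := hpw
  have hts : t.length = s.length := by
    simp only [List.length_append] at hlen
    omega
  have h3 : (t ++ p) ++ t = (p ++ t) ++ s := by
    apply List.append_cancel_left (as := p)
    simpa [List.append_assoc] using h
  have h2 : t ++ p = p ++ t := by
    have h4 := congrArg (List.take (p.length + t.length)) h3
    rwa [List.take_left' (by simp [Nat.add_comm]), List.take_left' (by simp)] at h4
  obtain ⟨z, m, n, htz, hpz⟩ := comm_words (t.length + p.length) t p le_rfl h2
  have hweq : p ++ t = (List.replicate (n + m) z).flatten := by
    rw [flat_rep_add, ← htz, ← hpz]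
  have h1 : n + m = 1 := hprim z (n + m) hweq
  have hn0 : n ≠ 0 := by
    intro h0
    apply hp
    rw [hpz, h0]
    simp
  have hm0 : m ≠ 0 := by
    intro h0
    apply hs
    apply List.length_eq_zero_iff.mp
    have ht : t.length = 0 := by rw [htz, h0]; simp
    omega
  omega

/-- Occurrences of a primitive word in its powers are at multiples of its length. -/
private lemma occ {A : Type*} (w : List A) (hw : w ≠ [])
    (hov : ∀ p s : List A, w ++ w = p ++ w ++ s → p = [] ∨ s = []) :
    ∀ (n : ℕ) (a b : List A), (List.replicate n w).flatten = a ++ w ++ b →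
      w.length ∣ a.length := by
  intro n
  induction n with
  | zero =>
    intro a b h
    exfalso
    have := congrArg List.length h
    simp only [List.flatten_nil, List.replicate_zero, List.length_nil,
      List.length_append] at this
    have hw0 : 0 < w.length := List.length_pos_iff.mpr hw
    omega
  | succ n ih =>
    intro a b h
    have hw0 : 0 < w.length := List.length_pos_iff.mpr hw
    rcases Nat.lt_or_ge a.length w.length with hlt | hge
    · rcases Nat.eq_zero_or_pos a.length with h0 | hpos
      · exact ⟨0, by omega⟩
      · exfalso
        have hlen := congrArg List.length h
        simp only [flat_rep_len, List.length_append] at hlen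
        -- hlen : (n+1) * w.length = ... (some assoc)
        cases n with
        | zero =>
          simp only [Nat.zero_add, Nat.one_mul] at hlen
          omega
        | succ n' =>
          have hpref2 : w ++ w <+: (List.replicate (n' + 1 + 1) w).flatten := by
            rw [flat_rep_succ, flat_rep_succ]
            exact ⟨(List.replicate n' w).flatten, by simp [List.append_assoc]⟩
          have hprefa : a ++ w <+: (List.replicate (n' + 1 + 1) w).flatten :=
            ⟨b, by rw [h, List.append_assoc]⟩
          have haw : a ++ w <+: w ++ w :=
            List.prefix_of_prefix_length_le hprefa hpref2
              (by simp only [List.length_append]; omega)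
          obtain ⟨s, hsw⟩ := haw
          rcases hov a s (by rw [← hsw, List.append_assoc]) with h' | h'
          · exact absurd h' (List.length_pos_iff.mp hpos)
          · subst h'
            have := congrArg List.length hsw
            simp only [List.length_append, List.append_nil] at this
            omega
    · have hwa : w <+: a := by
        have h1 : a <+: (List.replicate (n + 1) w).flatten :=
          ⟨w ++ b, by rw [h, List.append_assoc]⟩
        have h2 : w <+: (List.replicate (n + 1) w).flatten := by
          rw [flat_rep_succ]
          exact List.prefix_append w _
        exact List.prefix_of_prefix_length_le h2 h1 hge
      obtain ⟨a', rfl⟩ := hwa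
      have h' : (List.replicate n w).flatten = a' ++ w ++ b := by
        apply List.append_cancel_left (as := w)
        rw [← flat_rep_succ, h]
        simp [List.append_assoc]
      have := ih a' b h'
      rw [List.length_append]
      exact Nat.dvd_add ⟨1, (Nat.mul_one _).symm⟩ this

/-- For a primitive word `w`, the set of return words to `w` in the periodic
set `F(w*)` (the set of factors of powers of `w`) is the singleton `{w}`;
consequently it does not generate the free group `F(A)` when `|A| ≥ 2`. -/
theorem stmt_19 {A : Type*} [Fintype A] (w : List A)
    (hprim : ∀ (u : List A) (k : ℕ), w = (List.replicate k u).flatten → k = 1) :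
    ReturnWords {v : List A | ∃ n : ℕ, v <:+: (List.replicate n w).flatten} w
      = {w} ∧
    (2 ≤ Fintype.card A →
      Subgroup.closure {(w.map (FreeGroup.of (α := A))).prod}
        ≠ (⊤ : Subgroup (FreeGroup A))) := by
  classical
  have hw : w ≠ [] := by
    intro h0
    have := hprim [] 0 (by simp [h0])
    omega
  have hw0 : 0 < w.length := List.length_pos_iff.mpr hw
  have hov := no_overlap w hprim
  have hocc := occ w hw hov
  have hmem : w ∈ ReturnWords {v : List A | ∃ n : ℕ, v <:+: (List.replicate n w).flatten} w := by
    refine ⟨hw, ⟨2, ?_⟩, ⟨w, rfl⟩, hov⟩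
    have h2 : (List.replicate 2 w).flatten = w ++ w := by
      rw [(by norm_num : (2 : ℕ) = 1 + 1), flat_rep_succ, flat_rep_succ]
      simp
    rw [h2]
  constructor
  · ext u
    simp only [Set.mem_singleton_iff]
    constructor
    · rintro ⟨hne, ⟨n, hinf⟩, ⟨s, hs⟩, hint⟩
      obtain ⟨a, b, hab⟩ := hinf
      -- hab : a ++ (w ++ u) ++ b = (replicate n w).flatten
      have hocc1 : w.length ∣ a.length :=
        hocc n a (u ++ b) (by rw [← hab]; simp [List.append_assoc])
      have hocc2 : w.length ∣ (a ++ s).length := by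
        apply hocc n (a ++ s) b
        rw [← hab, hs]
        simp [List.append_assoc]
      have hsu : s.length = u.length := by
        have := congrArg List.length hs
        simp only [List.length_append] at this
        omega
      have hudvd : w.length ∣ u.length := by
        rw [List.length_append] at hocc2
        have := (Nat.dvd_add_right hocc1).mp hocc2
        rwa [hsu] at this
      obtain ⟨k, hk⟩ := hudvd
      have hk1 : 1 ≤ k := by
        have hu0 : u.length ≠ 0 := fun h0 => hne (List.length_eq_zero_iff.mp h0)
        rcases Nat.eq_zero_or_pos k with h0 | h1
        · exact absurd (by rw [hk, h0, Nat.mul_zero]) hu0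
        · exact h1
      obtain ⟨q, hq⟩ := hocc1
      have hlen := congrArg List.length hab
      simp only [flat_rep_len, List.length_append] at hlen
      have hqn : q ≤ n := by
        refine Nat.le_of_mul_le_mul_left ?_ hw0
        rw [← hq, Nat.mul_comm]
        omega
      have ha : a = (List.replicate q w).flatten := by
        apply List.IsPrefix.eq_of_length
        · refine List.prefix_of_prefix_length_le
            (⟨w ++ u ++ b, by rw [← hab]; simp [List.append_assoc]⟩ :
              a <+: (List.replicate n w).flatten) ?_ ?_
          · obtain ⟨r, rfl⟩ : ∃ r, n = q + r := ⟨n - q, by omega⟩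
            rw [flat_rep_add]
            exact List.prefix_append _ _
          · rw [flat_rep_len, hq, Nat.mul_comm]
        · rw [flat_rep_len, hq, Nat.mul_comm]
      obtain ⟨r, rfl⟩ : ∃ r, n = q + r := ⟨n - q, by omega⟩
      have hrest : (List.replicate r w).flatten = w ++ u ++ b := by
        apply List.append_cancel_left (as := (List.replicate q w).flatten)
        rw [← flat_rep_add, ← hab, ha]
        simp [List.append_assoc]
      have hr1 : 1 ≤ r := by
        rcases Nat.eq_zero_or_pos r with h0 | h1
        · exfalso
          have := congrArg List.length hrest
          simp only [h0, List.replicate_zero, List.flatten_nil, List.length_nil,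
            List.length_append] at this
          omega
        · exact h1
      obtain ⟨r', rfl⟩ : ∃ r', r = r' + 1 := ⟨r - 1, by omega⟩
      have hub : (List.replicate r' w).flatten = u ++ b := by
        apply List.append_cancel_left (as := w)
        rw [← flat_rep_succ, hrest]
        simp [List.append_assoc]
      have hlub := congrArg List.length hub
      simp only [flat_rep_len, List.length_append] at hlub
      have hkr : k ≤ r' := by
        refine Nat.le_of_mul_le_mul_left ?_ hw0
        rw [← hk, Nat.mul_comm w.length r']
        omega
      have hu : u = (List.replicate k w).flatten := by
        apply List.IsPrefix.eq_of_length
        · refine List.prefix_of_prefix_length_le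
            (⟨b, hub.symm⟩ : u <+: (List.replicate r' w).flatten) ?_ ?_
          · obtain ⟨d, rfl⟩ : ∃ d, r' = k + d := ⟨r' - k, by omega⟩
            rw [flat_rep_add]
            exact List.prefix_append _ _
          · rw [flat_rep_len, hk, Nat.mul_comm]
        · rw [flat_rep_len, hk, Nat.mul_comm]
      rcases Nat.lt_or_ge k 2 with hk2 | hk2
      · have hk1' : k = 1 := by omega
        rw [hu, hk1']
        simp
      · exfalso
        obtain ⟨k', rfl⟩ : ∃ k', k = k' + 1 + 1 := ⟨k - 2, by omega⟩
        have hu2 : w ++ u = w ++ w ++ (List.replicate (k' + 1) w).flatten := by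
          rw [hu, flat_rep_succ, flat_rep_succ]
          simp [List.append_assoc]
        rcases hint w ((List.replicate (k' + 1) w).flatten) hu2 with h' | h'
        · exact hw h'
        · rw [flat_rep_succ] at h'
          exact hw (List.append_eq_nil_iff.mp h').1
    · rintro rfl
      exact hmem
  · intro hcard h
    obtain ⟨a, b, hab⟩ := Fintype.exists_pair_of_one_lt_card (by omega : 1 < Fintype.card A)
    set x := (w.map (FreeGroup.of (α := A))).prod with hx
    have ha : FreeGroup.of a ∈ Subgroup.closure {x} := h ▸ Subgroup.mem_top _
    have hb : FreeGroup.of b ∈ Subgroup.closure {x} := h ▸ Subgroup.mem_top _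
    rw [Subgroup.mem_closure_singleton] at ha hb
    obtain ⟨m, hm⟩ := ha
    obtain ⟨n, hn⟩ := hb
    have hcomm : FreeGroup.of a * FreeGroup.of b = FreeGroup.of b * FreeGroup.of a := by
      rw [← hm, ← hn, ← zpow_add, ← zpow_add, add_comm]
    let f : A → Equiv.Perm (Fin 3) := fun c => if c = a then Equiv.swap 0 1 else Equiv.swap 1 2
    have hfa : f a = Equiv.swap 0 1 := if_pos rfl
    have hfb : f b = Equiv.swap 1 2 := if_neg (Ne.symm hab)
    have hlift := congrArg (FreeGroup.lift f) hcomm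
    rw [map_mul, map_mul, FreeGroup.lift_apply_of, FreeGroup.lift_apply_of, hfa, hfb] at hlift
    exact absurd hlift (by decide)
end
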